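/- arXiv:math/0607788 — 6 statements merged into one kernel-verified Lean document; each statement's English description precedes it below -/
import Mathlib

section
/- For all natural numbers k, l ≥ 1, r(k+1, l+1) ≤ binomial(k+l, k). -/
/-- The colouring `χ` contains a monochromatic clique of colour `c` and size `k`. -/
def hasMonoClique {n : ℕ} (χ : Fin n → Fin n → Bool) (c : Bool) (k : ℕ) : Prop :=
  ∃ S : Finset (Fin n), S.card = k ∧ ∀ x ∈ S, ∀ y ∈ S, x ≠ y → χ x y = c

/-- `n` is Ramsey for `(k, l)`: every symmetric red/blue colouring of the edges of `K_n`
contains a red `K_k` or a blue `K_l`. -/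
def ramseyProp (n k l : ℕ) : Prop :=
  ∀ χ : Fin n → Fin n → Bool, (∀ x y, χ x y = χ y x) →
    hasMonoClique χ true k ∨ hasMonoClique χ false l

/-- The two-colour Ramsey number `r(k, l)`. -/
noncomputable def ramsey (k l : ℕ) : ℕ := sInf {n | ramseyProp n k l}


/-! Pick a vertex `v` of a colouring of `K_{a+b}`. Its `a + b - 1` neighbours split into those
joined to `v` in red and in blue, so there are at least `a` red or at least `b` blue neighbours.
A red `K_k` among `a ≥ r(k, l+1)` red neighbours extends by `v` to a red `K_{k+1}`, and a blue
`K_l` among `b ≥ r(k+1, l)` blue neighbours to a blue `K_{l+1}`; hence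
`r(k+1, l+1) ≤ r(k, l+1) + r(k+1, l)`, and Pascal's rule turns this recursion into the binomial
bound. -/

open Finset

section Colouring

variable {m : ℕ} {χ : Fin m → Fin m → Bool}

theorem hasMonoClique_one (hm : 0 < m) (c : Bool) : hasMonoClique χ c 1 :=
  ⟨{⟨0, hm⟩}, card_singleton _, by simp⟩

theorem ramseyProp_one_left {l : ℕ} (hm : 0 < m) : ramseyProp m 1 l :=
  fun _ _ => .inl (hasMonoClique_one hm true)

theorem ramseyProp_one_right {k : ℕ} (hm : 0 < m) : ramseyProp m k 1 :=
  fun _ _ => .inr (hasMonoClique_one hm false)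

theorem ramseyProp.exists_monoClique_subset {a k l : ℕ} (h : ramseyProp a k l)
    (hsym : ∀ x y, χ x y = χ y x) {T : Finset (Fin m)} (hT : a ≤ #T) :
    (∃ S ⊆ T, #S = k ∧ (S : Set (Fin m)).Pairwise (χ · · = true)) ∨
      ∃ S ⊆ T, #S = l ∧ (S : Set (Fin m)).Pairwise (χ · · = false) := by
  obtain ⟨U, hUT, hU⟩ := exists_subset_card_eq hT
  let f : Fin a ↪ Fin m := (U.orderEmbOfFin hU).toEmbedding
  have lift : ∀ c j, hasMonoClique (fun x y => χ (f x) (f y)) c j →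
      ∃ S ⊆ T, #S = j ∧ (S : Set (Fin m)).Pairwise (χ · · = c) := by
    rintro c j ⟨S, rfl, hS⟩
    refine ⟨S.map f, ?_, card_map f, ?_⟩
    · intro x hx
      obtain ⟨i, -, rfl⟩ := mem_map.1 hx
      exact hUT (U.orderEmbOfFin_mem hU i)
    · rw [coe_map]
      exact Set.Pairwise.image hS
  exact (h _ fun x y => hsym _ _).imp (lift true k) (lift false l)

def colourNeighbours (χ : Fin m → Fin m → Bool) (v : Fin m) (c : Bool) : Finset (Fin m) :=
  (univ.erase v).filter (χ v · = c)

theorem card_colourNeighbours_add (v : Fin m) :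
    #(colourNeighbours χ v true) + #(colourNeighbours χ v false) = m - 1 := by
  have := card_filter_add_card_filter_not (s := univ.erase v) (χ v · = true)
  simpa [colourNeighbours] using this

theorem hasMonoClique_insert (hsym : ∀ x y, χ x y = χ y x) {v : Fin m} {c : Bool}
    {S : Finset (Fin m)} (hSv : S ⊆ colourNeighbours χ v c)
    (hS : (S : Set (Fin m)).Pairwise (χ · · = c)) : hasMonoClique χ c (#S + 1) := by
  have hv : ∀ x ∈ S, x ≠ v ∧ χ v x = c := fun x hx => by
    simpa [colourNeighbours] using hSv hx
  have hvS : v ∉ S := fun h => (hv v h).1 rfl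
  refine ⟨insert v S, card_insert_of_notMem hvS, ?_⟩
  show ((insert v S : Finset (Fin m)) : Set (Fin m)).Pairwise (χ · · = c)
  rw [coe_insert]
  exact hS.insert fun x hx _ => ⟨(hv x hx).2, hsym x v ▸ (hv x hx).2⟩

end Colouring

theorem ramseyProp_add {a b k l : ℕ} (hab : 0 < a + b) (ha : ramseyProp a k (l + 1))
    (hb : ramseyProp b (k + 1) l) : ramseyProp (a + b) (k + 1) (l + 1) := by
  intro χ hsym
  let v : Fin (a + b) := ⟨0, hab⟩
  have hcard := card_colourNeighbours_add (χ := χ) v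
  rcases (by omega : a ≤ #(colourNeighbours χ v true) ∨ b ≤ #(colourNeighbours χ v false))
    with hred | hblue
  · rcases ha.exists_monoClique_subset hsym hred with ⟨S, hSv, rfl, hS⟩ | ⟨S, -, hSl, hS⟩
    · exact .inl (hasMonoClique_insert hsym hSv hS)
    · exact .inr ⟨S, hSl, hS⟩
  · rcases hb.exists_monoClique_subset hsym hblue with ⟨S, -, hSk, hS⟩ | ⟨S, hSv, rfl, hS⟩
    · exact .inl ⟨S, hSk, hS⟩
    · exact .inr (hasMonoClique_insert hsym hSv hS)

theorem ramseyProp_choose (k l : ℕ) : ramseyProp ((k + l).choose k) (k + 1) (l + 1) := by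
  induction k generalizing l with
  | zero => simpa using ramseyProp_one_left one_pos
  | succ k ihk =>
    induction l with
    | zero => simpa using ramseyProp_one_right one_pos
    | succ l ihl =>
      have pascal : (k + 1 + (l + 1)).choose (k + 1)
          = (k + (l + 1)).choose k + (k + 1 + l).choose (k + 1) := by
        rw [show k + 1 + (l + 1) = k + (l + 1) + 1 by omega, Nat.choose_succ_succ',
          show k + (l + 1) = k + 1 + l by omega]
      rw [pascal]
      exact ramseyProp_add (Nat.add_pos_left (Nat.choose_pos (by omega)) _) (ihk (l + 1)) ihl

theorem stmt1_general (k l : ℕ) :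
    ramsey (k + 1) (l + 1) ≤ (k + l).choose k :=
  Nat.sInf_le (ramseyProp_choose k l)

theorem stmt1 (k l : ℕ) (hk : 1 ≤ k) (hl : 1 ≤ l) :
    ramsey (k + 1) (l + 1) ≤ (k + l).choose k :=
  stmt1_general k l
end

section
/- Goodman's formula: in any red/blue colouring of the edges of K_n, the number T of monochromatic triangles equals (1/2)[ Σ_x C(d_x, 2) + Σ_x C(n-1-d_x, 2) - C(n, 3) ], where d_x is the red degree of vertex x. -/
/-! Count monochromatic angles: pairs of a vertex `x` and a 2-set `{y, z}` of other vertices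
with `xy` and `xz` of the same colour. At `x` there are `C(r_x, 2) + C(b_x, 2)` of them, with
`b_x = n - 1 - r_x`. A monochromatic triangle contains three angles and, with only two colours,
every other triangle exactly one, so the total is `3T + (C(n, 3) - T) = 2T + C(n, 3)`. -/

open Finset

theorem sum_ite_three_one {ι : Type*} (s : Finset ι) (p : ι → Prop) [DecidablePred p] :
    ∑ i ∈ s, (if p i then 3 else 1) = 2 * #{i ∈ s | p i} + #s := by
  rw [card_filter, mul_sum, card_eq_sum_ones, ← sum_add_distrib]
  refine sum_congr rfl fun i _ => ?_
  split_ifs <;> rfl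

section

variable {α κ : Type*} [DecidableEq α]

theorem card_filter_powersetCard_succ_mem {s : Finset α} {x : α} (hx : x ∈ s) (k : ℕ)
    (p : Finset α → Prop) [DecidablePred p] :
    #{S ∈ s.powersetCard (k + 1) | x ∈ S ∧ p (S.erase x)} =
      #{P ∈ (s.erase x).powersetCard k | p P} := by
  refine card_nbij' (fun S => S.erase x) (insert x) ?_ ?_ ?_ ?_
  · intro S hS
    simp only [coe_filter, mem_powersetCard, Set.mem_ofPred_eq] at hS ⊢
    exact ⟨⟨erase_subset_erase x hS.1.1, by rw [card_erase_of_mem hS.2.1, hS.1.2]; rfl⟩, hS.2.2⟩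
  · intro P hP
    simp only [coe_filter, mem_powersetCard, Set.mem_ofPred_eq] at hP ⊢
    have hxP : x ∉ P := fun h => (mem_erase.1 (hP.1.1 h)).1 rfl
    refine ⟨⟨insert_subset hx (hP.1.1.trans (erase_subset x s)), ?_⟩, mem_insert_self x P, ?_⟩
    · rw [card_insert_of_notMem hxP, hP.1.2]
    · rw [erase_insert hxP]
      exact hP.2
  · intro S hS
    exact insert_erase (mem_filter.1 hS).2.1
  · intro P hP
    exact erase_insert fun h => (mem_erase.1 ((mem_powersetCard.1 (mem_filter.1 hP).1).1 h)).1 rfl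

variable [Fintype α]

theorem sum_card_filter_mem_eq (t : Finset (Finset α)) (q : α → Finset α → Prop)
    [∀ x S, Decidable (q x S)] :
    ∑ x, #{S ∈ t | x ∈ S ∧ q x S} = ∑ S ∈ t, #{x ∈ S | q x S} := by
  refine (sum_card_bipartiteAbove_eq_sum_card_bipartiteBelow (s := univ) (t := t)
    (r := fun x S => x ∈ S ∧ q x S)).trans (sum_congr rfl fun S _ => congrArg card ?_)
  ext x
  simp [bipartiteBelow]

variable [DecidableEq κ]

def colourNbhd (c : α → α → κ) (b : κ) (x : α) : Finset α :=
  {y | y ≠ x ∧ c x y = b}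

-- An `abbrev`, so that the instance deciding it is the one inferred for the unfolded formula.
abbrev IsMonochromatic (c : α → α → Bool) (S : Finset α) : Prop :=
  (∀ x ∈ S, ∀ y ∈ S, x ≠ y → c x y = true) ∨ (∀ x ∈ S, ∀ y ∈ S, x ≠ y → c x y = false)

theorem sum_card_colourNbhd [Fintype κ] (c : α → α → κ) (x : α) :
    ∑ b, #(colourNbhd c b x) = Fintype.card α - 1 := by
  rw [← card_univ, ← card_erase_of_mem (mem_univ x),
    card_eq_sum_card_fiberwise (t := univ) (f := c x) fun _ _ => mem_univ _]
  refine sum_congr rfl fun b _ => congrArg card ?_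
  ext y
  simp [colourNbhd]

theorem card_filter_powersetCard_subset_colourNbhd [Fintype κ] (c : α → α → κ) (x : α)
    {k : ℕ} (hk : k ≠ 0) :
    #{P ∈ (univ.erase x).powersetCard k | ∃ b, P ⊆ colourNbhd c b x} =
      ∑ b, (#(colourNbhd c b x)).choose k := by
  have hunion : {P ∈ (univ.erase x).powersetCard k | ∃ b, P ⊆ colourNbhd c b x} =
      univ.biUnion fun b => (colourNbhd c b x).powersetCard k := by
    ext P
    simp only [mem_filter, mem_powersetCard, mem_biUnion, mem_univ, true_and]
    constructor
    · rintro ⟨⟨-, hcard⟩, b, hb⟩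
      exact ⟨b, hb, hcard⟩
    · rintro ⟨b, hb, hcard⟩
      refine ⟨⟨hb.trans fun y hy => ?_, hcard⟩, b, hb⟩
      exact mem_erase.2 ⟨(mem_filter.1 hy).2.1, mem_univ y⟩
  rw [hunion, card_biUnion]
  · simp only [card_powersetCard]
  · intro b _ b' _ hbb'
    refine disjoint_left.2 fun P hP hP' => ?_
    rw [mem_powersetCard] at hP hP'
    obtain ⟨y, hy⟩ := card_pos.1 (hP.2 ▸ Nat.pos_of_ne_zero hk)
    exact hbb' ((mem_filter.1 (hP.1 hy)).2.2.symm.trans (mem_filter.1 (hP'.1 hy)).2.2)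

theorem card_filter_subset_colourNbhd_of_card_eq_three (c : α → α → Bool)
    [DecidablePred (IsMonochromatic c)] (hc : ∀ x y, c x y = c y x) {S : Finset α}
    (hS : #S = 3) :
    #{x ∈ S | ∃ b, S.erase x ⊆ colourNbhd c b x} = if IsMonochromatic c S then 3 else 1 := by
  obtain ⟨x, y, z, hxy, hxz, hyz, rfl⟩ := card_eq_three.1 hS
  have hpair {u v w : α} (huv : u ≠ v) (huw : u ≠ w) :
      (∃ b, ({v, w} : Finset α) ⊆ colourNbhd c b u) ↔ c u v = c u w := by
    simp [insert_subset_iff, colourNbhd, huv, huw, eq_comm]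
  have hex : ({x, y, z} : Finset α).erase x = {y, z} := erase_insert (by simp [hxy, hxz])
  have hey : ({x, y, z} : Finset α).erase y = {x, z} := by
    rw [erase_insert_of_ne hxy, erase_insert (by simpa using hyz)]
  have hez : ({x, y, z} : Finset α).erase z = {x, y} := by
    rw [erase_insert_of_ne hxz, erase_insert_of_ne hyz, erase_singleton, insert_empty]
  rw [card_filter, sum_insert (by simp [hxy, hxz]), sum_insert (by simp [hyz]), sum_singleton]
  simp only [hex, hey, hez, hpair hxy hxz, hpair hxy.symm hyz, hpair hxz.symm hyz.symm]
  simp only [IsMonochromatic, mem_insert, mem_singleton, forall_eq_or_imp, forall_eq, hc y x,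
    hc z x, hc z y]
  cases c x y <;> cases c x z <;> cases c y z <;> simp [hxy, hxz, hyz, hxy.symm, hxz.symm, hyz.symm]

theorem sum_sum_choose_two_card_colourNbhd (c : α → α → Bool)
    [DecidablePred (IsMonochromatic c)] (hc : ∀ x y, c x y = c y x) :
    ∑ x, ∑ b, (#(colourNbhd c b x)).choose 2 =
      2 * #{S ∈ univ.powersetCard 3 | IsMonochromatic c S} + (Fintype.card α).choose 3 := by
  calc ∑ x, ∑ b, (#(colourNbhd c b x)).choose 2
      = ∑ x, #{S ∈ univ.powersetCard 3 | x ∈ S ∧ ∃ b, S.erase x ⊆ colourNbhd c b x} := by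
        refine sum_congr rfl fun x _ => ?_
        rw [← card_filter_powersetCard_subset_colourNbhd c x two_ne_zero]
        -- `convert` reconciles the `Fintype` and `Bool` instances deciding `∃ b, _`.
        convert (card_filter_powersetCard_succ_mem (mem_univ x) 2
          fun P => ∃ b, P ⊆ colourNbhd c b x).symm
    _ = ∑ S ∈ univ.powersetCard 3, #{x ∈ S | ∃ b, S.erase x ⊆ colourNbhd c b x} :=
        sum_card_filter_mem_eq _ _
    _ = ∑ S ∈ univ.powersetCard 3, if IsMonochromatic c S then 3 else 1 :=
        sum_congr rfl fun S hS =>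
          card_filter_subset_colourNbhd_of_card_eq_three c hc (mem_powersetCard.1 hS).2
    _ = _ := by rw [sum_ite_three_one, card_powersetCard, card_univ]

end

theorem stmt4 (n : ℕ) (χ : Fin n → Fin n → Bool) (hsymm : ∀ x y, χ x y = χ y x) :
    (((Finset.univ : Finset (Fin n)).powersetCard 3).filter
        (fun S => (∀ x ∈ S, ∀ y ∈ S, x ≠ y → χ x y = true) ∨
          (∀ x ∈ S, ∀ y ∈ S, x ≠ y → χ x y = false))).card
      = (1 / 2 : ℝ) *
        ((∑ x : Fin n, ((Finset.univ.filter fun y => y ≠ x ∧ χ x y = true).card.choose 2 : ℝ)) +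
         (∑ x : Fin n,
            ((n - 1 - (Finset.univ.filter fun y => y ≠ x ∧ χ x y = true).card).choose 2 : ℝ)) -
         (n.choose 3 : ℝ)) := by
  have hblue (x : Fin n) : n - 1 - #(colourNbhd χ true x) = #(colourNbhd χ false x) := by
    have hsum := sum_card_colourNbhd χ x
    rw [Fintype.sum_bool, Fintype.card_fin] at hsum
    omega
  have key := sum_sum_choose_two_card_colourNbhd χ hsymm
  simp only [Fintype.sum_bool, sum_add_distrib, ← hblue, Fintype.card_fin] at key
  have goodman : (#{S ∈ univ.powersetCard 3 | IsMonochromatic χ S} : ℝ) =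
      1 / 2 * (∑ x, ((#(colourNbhd χ true x)).choose 2 : ℝ) +
        ∑ x, ((n - 1 - #(colourNbhd χ true x)).choose 2 : ℝ) - n.choose 3) := by
    have keyR := congrArg (Nat.cast : ℕ → ℝ) key
    push_cast at keyR
    linarith
  exact goodman
end

section
/- Let V be a finite set of size n and g : V × V → ℝ a symmetric function with |g(x,y)| ≤ 1 for all x,y, and suppose Σ_y g(x,y)·g(y,z) ≤ ν·n for all x ≠ z, where 0 < ν ≤ 1. Then for any odd d ≥ 1, any c ≥ 0, and any function h of c+d variables bounded in absolute value by 1: |Σ_y Σ_{x_1,...,x_{c+d}} g(y,x_1)···g(y,x_d)·h(x_1,...,x_{c+d})| ≤ √2·ν^{d/2}·n^{c+d+1} + (1/(√2·ν^{d/2+1}))·n^{c+d}. -/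
/-!
Bound the outer sum by `n ^ c` times `∑_{x ∈ V^d} |F x|` with `F x = ∑_y ∏_i g(y, x_i)`, and apply
Cauchy–Schwarz. Expanding the square gives `∑_x (F x)^2 = ∑_{y,y'} (∑_z g(y,z) g(y',z))^d`: the
`n` diagonal terms are at most `n^d`, and since `d` is odd each off-diagonal term is at most
`(ν n)^d`. Taking the square root of `ν^d n^{2d+2} + n^{2d+1}` gives the bound.
-/

open Finset

theorem sum_comp_castLE {V R : Type*} [Fintype V] [AddCommMonoid R] (c d : ℕ)
    (u : (Fin d → V) → R) :
    ∑ x : Fin (c + d) → V, u (fun i => x (Fin.castLE (Nat.le_add_left d c) i)) =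
      Fintype.card V ^ c • ∑ x : Fin d → V, u x := by
  let e : (Fin (c + d) → V) ≃ (Fin d → V) × (Fin c → V) :=
    (Equiv.arrowCongr ((finCongr (Nat.add_comm c d)).trans finSumFinEquiv.symm)
      (Equiv.refl V)).trans (Equiv.sumArrowEquivProdArrow _ _ _)
  rw [Fintype.sum_bijective e e.bijective (fun x => u (fun i => x (Fin.castLE _ i))) (fun p => u p.1)
      fun _ => rfl,
    Fintype.sum_prod_type, Finset.sum_comm]
  simp [Finset.sum_const]

theorem abs_sum_comp_castLE_mul_le {V : Type*} [Fintype V] {c d : ℕ}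
    (F : (Fin d → V) → ℝ) (h : (Fin (c + d) → V) → ℝ) (hh : ∀ x, |h x| ≤ 1) :
    |∑ x : Fin (c + d) → V, F (fun i => x (Fin.castLE (Nat.le_add_left d c) i)) * h x| ≤
      (Fintype.card V : ℝ) ^ c * ∑ x : Fin d → V, |F x| := by
  calc _ ≤ ∑ x : Fin (c + d) → V, |F (fun i => x (Fin.castLE (Nat.le_add_left d c) i))| := by
        refine (abs_sum_le_sum_abs _ _).trans (sum_le_sum fun x _ => ?_)
        rw [abs_mul]
        exact mul_le_of_le_one_right (abs_nonneg _) (hh x)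
    _ = _ := by rw [sum_comp_castLE c d (fun x => |F x|), nsmul_eq_mul, Nat.cast_pow]

theorem sum_sq_sum_prod_eq {V W R : Type*} [Fintype V] [Fintype W] [CommSemiring R]
    (g : V → W → R) (d : ℕ) :
    ∑ x : Fin d → W, (∑ y, ∏ i, g y (x i)) ^ 2 = ∑ y, ∑ y', (∑ z, g y z * g y' z) ^ d := by
  simp_rw [sq, sum_mul_sum, ← prod_mul_distrib, Fintype.sum_pow]
  rw [sum_comm]
  exact sum_congr rfl fun y _ => sum_comm

theorem sum_sum_pow_le {V W : Type*} [Fintype V] [Fintype W] (g : V → W → ℝ)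
    (hg : ∀ y z, |g y z| ≤ 1) {K : ℝ} (hK : 0 ≤ K) {d : ℕ} (hd : Odd d)
    (hoff : ∀ y y', y ≠ y' → ∑ z, g y z * g y' z ≤ K) :
    ∑ y, ∑ y', (∑ z, g y z * g y' z) ^ d ≤
      Fintype.card V * (Fintype.card W : ℝ) ^ d + (Fintype.card V : ℝ) ^ 2 * K ^ d := by
  classical
  have hdiag (y : V) : (∑ z, g y z * g y z) ^ d ≤ (Fintype.card W : ℝ) ^ d := by
    refine pow_le_pow_left₀ (sum_nonneg fun z _ => mul_self_nonneg _) ?_ d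
    calc ∑ z, g y z * g y z ≤ ∑ _z : W, (1 : ℝ) :=
          sum_le_sum fun z _ => abs_le_one_iff_mul_self_le_one.mp (hg y z)
      _ = Fintype.card W := by simp
  have hpoint (y y' : V) : (∑ z, g y z * g y' z) ^ d ≤
      K ^ d + if y = y' then (Fintype.card W : ℝ) ^ d else 0 := by
    split_ifs with hyy
    · subst hyy
      exact (hdiag y).trans (le_add_of_nonneg_left (pow_nonneg hK d))
    · rw [add_zero]
      exact hd.pow_le_pow.mpr (hoff y y' hyy)
  calc _ ≤ ∑ y : V, ∑ y' : V, (K ^ d + if y = y' then (Fintype.card W : ℝ) ^ d else 0) :=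
        sum_le_sum fun y _ => sum_le_sum fun y' _ => hpoint y y'
    _ = _ := by
        simp only [sum_add_distrib, sum_ite_eq, sum_const, card_univ, mem_univ, if_true,
          nsmul_eq_mul]
        ring

theorem le_add_div_of_sq_le_sq_add {S A B : ℝ} (hA : 0 < A) (hB : 0 ≤ B)
    (h : S ^ 2 ≤ A ^ 2 + B) : S ≤ A + B / (2 * A) := by
  refine le_of_sq_le_sq (h.trans ?_) (by positivity)
  have : (A + B / (2 * A)) ^ 2 = A ^ 2 + B + (B / (2 * A)) ^ 2 := by
    field_simp
    ring
  rw [this]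
  nlinarith [sq_nonneg (B / (2 * A))]

theorem sum_abs_sum_prod_le {V : Type*} [Fintype V] [Nonempty V] (g : V → V → ℝ)
    (hg : ∀ y z, |g y z| ≤ 1) {ν : ℝ} (hν : 0 < ν) {d : ℕ} (hd : Odd d)
    (hoff : ∀ y y', y ≠ y' → ∑ z, g y z * g y' z ≤ ν * Fintype.card V) :
    ∑ x : Fin d → V, |∑ y, ∏ i, g y (x i)| ≤
      ν ^ ((d : ℝ) / 2) * (Fintype.card V : ℝ) ^ (d + 1) +
        (Fintype.card V : ℝ) ^ d / (2 * ν ^ ((d : ℝ) / 2)) := by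
  set n : ℝ := (Fintype.card V : ℝ)
  set P : ℝ := ν ^ ((d : ℝ) / 2)
  have hn : 0 < n := Nat.cast_pos.mpr Fintype.card_pos
  have hP : 0 < P := Real.rpow_pos_of_pos hν _
  have hP2 : P ^ 2 = ν ^ d := by
    rw [← Real.rpow_natCast, ← Real.rpow_mul hν.le, ← Real.rpow_natCast]
    ring_nf
  have hsq : (∑ x : Fin d → V, |∑ y, ∏ i, g y (x i)|) ^ 2 ≤
      (P * n ^ (d + 1)) ^ 2 + n ^ (2 * d + 1) :=
    calc _ ≤ n ^ d * ∑ x : Fin d → V, (∑ y, ∏ i, g y (x i)) ^ 2 := by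
          simpa [n] using sq_sum_le_card_mul_sum_sq (s := univ)
            (f := fun x : Fin d → V => |∑ y, ∏ i, g y (x i)|)
      _ = n ^ d * ∑ y, ∑ y', (∑ z, g y z * g y' z) ^ d := by rw [sum_sq_sum_prod_eq]
      _ ≤ n ^ d * (n * n ^ d + n ^ 2 * (ν * n) ^ d) := by
          gcongr
          exact sum_sum_pow_le g hg (by positivity) hd hoff
      _ = _ := by rw [mul_pow P, hP2]; ring
  calc _ ≤ P * n ^ (d + 1) + n ^ (2 * d + 1) / (2 * (P * n ^ (d + 1))) :=
        le_add_div_of_sq_le_sq_add (by positivity) (by positivity) hsq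
    _ = _ := by
        field_simp
        ring

theorem stmt5_general (V : Type*) [Fintype V] (n : ℕ) (hn : Fintype.card V = n)
    (g : V → V → ℝ) (hsymm : ∀ x y, g x y = g y x) (hbd : ∀ x y, |g x y| ≤ 1)
    (ν : ℝ) (hν0 : 0 < ν) (hν1 : ν ≤ 1)
    (hquasi : ∀ x z : V, x ≠ z → ∑ y : V, g x y * g y z ≤ ν * n)
    (c d : ℕ) (hd : Odd d)
    (h : (Fin (c + d) → V) → ℝ) (hh : ∀ x, |h x| ≤ 1) :
    |∑ y : V, ∑ x : Fin (c + d) → V,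
        (∏ i : Fin d, g y (x (Fin.castLE (Nat.le_add_left d c) i))) * h x| ≤
      Real.sqrt 2 * ν ^ ((d : ℝ) / 2) * (n : ℝ) ^ (c + d + 1) +
        1 / (Real.sqrt 2 * ν ^ ((d : ℝ) / 2 + 1)) * (n : ℝ) ^ (c + d) := by
  subst hn
  rcases isEmpty_or_nonempty V with hV | hV
  · simp only [Finset.univ_eq_empty, Finset.sum_empty, abs_zero]
    positivity
  have hoff (y y' : V) (hyy : y ≠ y') : ∑ z, g y z * g y' z ≤ ν * Fintype.card V := by
    simpa only [hsymm y'] using hquasi y y' hyy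
  set N : ℝ := (Fintype.card V : ℝ)
  set P : ℝ := ν ^ ((d : ℝ) / 2)
  have hP : 0 < P := Real.rpow_pos_of_pos hν0 _
  have hsqrt2 : 1 ≤ Real.sqrt 2 := Real.one_le_sqrt.mpr one_le_two
  have hsqrt2_le : Real.sqrt 2 ≤ 2 := Real.sqrt_le_iff.mpr ⟨zero_le_two, by norm_num⟩
  rw [sum_comm]
  simp only [← sum_mul]
  calc _ ≤ N ^ c * ∑ x : Fin d → V, |∑ y, ∏ i, g y (x i)| :=
        abs_sum_comp_castLE_mul_le (fun x => ∑ y, ∏ i, g y (x i)) h hh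
    _ ≤ N ^ c * (P * N ^ (d + 1) + N ^ d / (2 * P)) := by
        gcongr
        exact sum_abs_sum_prod_le g hbd hν0 hd hoff
    _ = P * N ^ (c + d + 1) + 1 / (2 * P) * N ^ (c + d) := by ring
    _ ≤ Real.sqrt 2 * P * N ^ (c + d + 1) + 1 / (Real.sqrt 2 * (P * ν)) * N ^ (c + d) := by
        gcongr ?_ * _ + 1 / ?_ * _
        · exact le_mul_of_one_le_left hP.le hsqrt2
        · nlinarith [mul_le_mul hsqrt2_le hν1 hν0.le zero_le_two]
    _ = _ := by rw [Real.rpow_add hν0, Real.rpow_one]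

theorem stmt5 (V : Type*) [Fintype V] (n : ℕ) (hn : Fintype.card V = n)
    (g : V → V → ℝ) (hsymm : ∀ x y, g x y = g y x) (hbd : ∀ x y, |g x y| ≤ 1)
    (ν : ℝ) (hν0 : 0 < ν) (hν1 : ν ≤ 1)
    (hquasi : ∀ x z : V, x ≠ z → ∑ y : V, g x y * g y z ≤ ν * n)
    (c d : ℕ) (hd : Odd d) (hd1 : 1 ≤ d)
    (h : (Fin (c + d) → V) → ℝ) (hh : ∀ x, |h x| ≤ 1) :
    |∑ y : V, ∑ x : Fin (c + d) → V,
        (∏ i : Fin d, g y (x (Fin.castLE (Nat.le_add_left d c) i))) * h x| ≤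
      Real.sqrt 2 * ν ^ ((d : ℝ) / 2) * (n : ℝ) ^ (c + d + 1) +
        1 / (Real.sqrt 2 * ν ^ ((d : ℝ) / 2 + 1)) * (n : ℝ) ^ (c + d) :=
  stmt5_general V n hn g hsymm hbd ν hν0 hν1 hquasi c d hd h hh
end

section
/- Let V be a finite set of size n and g : V × V → ℝ symmetric with |g| ≤ 1 and Σ_x g(y,x)·g(x,y') ≤ ν·n for all y ≠ y' with 0 < ν ≤ 1. Then for any even d ≥ 2: Σ_{y,y'} (Σ_x g(y,x)·g(x,y'))^d ≤ 2·ν^d·n^{d+2} + (2/ν)·n^{d+1}. -/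
/-!
Put `F y y' = ∑ x, g y x * g x y'` and `t = ν n`. As `g` is symmetric, `F = G Gᴴ` is positive
semidefinite, hence so is its entrywise power `F^(d+1)` (Schur product theorem), and the sum of
its entries is nonnegative. Therefore `∑ F^d ≤ ∑ (F^d + F^(d+1) / t)`, and for even `d` the
summand `a^d + a^(d+1) / t` is at most `2 t^d` when `a ≤ t` (off the diagonal, by the
hypothesis on `g`), while on the diagonal `|F| ≤ n` bounds it by `n^d + n^d / ν`.
-/

open scoped ComplexOrder Matrix

namespace Matrix

variable {ι 𝕜 : Type*} [RCLike 𝕜]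

theorem PosSemidef.map_pow [Finite ι] {A : Matrix ι ι 𝕜} (hA : A.PosSemidef) (k : ℕ) :
    (A.map (· ^ k)).PosSemidef := by
  induction k with
  | zero =>
    have := posSemidef_vecMulVec_self_star (fun _ : ι => (1 : 𝕜))
    convert this using 1
    ext i j
    simp [vecMulVec_apply]
  | succ k ih =>
    convert ih.hadamard hA using 1
    ext i j
    simp only [map_apply, hadamard_apply, pow_succ]

theorem PosSemidef.sum_sum_nonneg [Fintype ι] {A : Matrix ι ι 𝕜} (hA : A.PosSemidef) :
    0 ≤ ∑ i, ∑ j, A i j := by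
  simpa [dotProduct, mulVec] using hA.dotProduct_mulVec_nonneg 1

end Matrix

section

variable {K : Type*} [Field K] [LinearOrder K] [IsStrictOrderedRing K]

theorem pow_add_pow_succ_div_le_two_mul_pow {a t : K} {d : ℕ} (hd : Even d) (ht : 0 < t)
    (hat : a ≤ t) : a ^ d + a ^ (d + 1) / t ≤ 2 * t ^ d := by
  rcases le_or_gt 0 a with ha | ha
  · have had : a ^ d ≤ t ^ d := pow_le_pow_left₀ ha hat d
    have had1 : a ^ (d + 1) / t ≤ t ^ d := by
      rw [div_le_iff₀ ht, ← pow_succ]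
      exact pow_le_pow_left₀ ha hat _
    linarith
  rcases le_or_gt (-t) a with hta | hta
  · have had : a ^ d ≤ t ^ d := by
      rw [← hd.neg_pow]
      exact pow_le_pow_left₀ (by linarith) (by linarith) d
    have had1 : a ^ (d + 1) / t ≤ 0 :=
      div_nonpos_of_nonpos_of_nonneg (hd.add_one.pow_nonpos ha.le) ht.le
    linarith [pow_nonneg ht.le d]
  · have hsplit : a ^ d + a ^ (d + 1) / t = a ^ d * ((t + a) / t) := by
      field_simp
      ring
    rw [hsplit]
    have : a ^ d * ((t + a) / t) ≤ 0 :=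
      mul_nonpos_of_nonneg_of_nonpos (hd.pow_nonneg a)
        (div_nonpos_of_nonpos_of_nonneg (by linarith) ht.le)
    linarith [pow_nonneg ht.le d]

theorem pow_add_pow_succ_div_le_of_abs_le {a m t : K} (d : ℕ) (ham : |a| ≤ m) (ht : 0 ≤ t) :
    a ^ d + a ^ (d + 1) / t ≤ m ^ d + m ^ (d + 1) / t := by
  have hpow (k : ℕ) : a ^ k ≤ m ^ k :=
    (le_abs_self _).trans ((abs_pow a k).trans_le (pow_le_pow_left₀ (abs_nonneg a) ham k))
  exact add_le_add (hpow d) (div_le_div_of_nonneg_right (hpow (d + 1)) ht)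

end

theorem sum_sum_pow_sum_mul_nonneg {ι κ : Type*} [Fintype ι] [Fintype κ] (f : ι → κ → ℝ)
    (k : ℕ) : 0 ≤ ∑ i, ∑ j, (∑ x, f i x * f j x) ^ k := by
  have hgram : Matrix.of f * (Matrix.of f)ᴴ = Matrix.of fun i j ↦ ∑ x, f i x * f j x := by
    ext i j
    simp [Matrix.mul_apply]
  simpa only [hgram, Matrix.map_apply, Matrix.of_apply] using
    ((Matrix.posSemidef_self_mul_conjTranspose (Matrix.of f)).map_pow k).sum_sum_nonneg

theorem abs_sum_mul_le_card {V : Type*} [Fintype V] {f h : V → ℝ} (hf : ∀ x, |f x| ≤ 1)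
    (hh : ∀ x, |h x| ≤ 1) : |∑ x, f x * h x| ≤ Fintype.card V :=
  calc |∑ x, f x * h x| ≤ ∑ x, |f x * h x| := Finset.abs_sum_le_sum_abs _ _
    _ ≤ ∑ _x : V, (1 : ℝ) := by
      gcongr with x
      rw [abs_mul]
      exact mul_le_one₀ (hf x) (abs_nonneg _) (hh x)
    _ = Fintype.card V := by simp

theorem sum_sum_pow_le_of_sum_sum_pow_succ_nonneg {V : Type*} [Fintype V] {F : V → V → ℝ}
    {t m : ℝ} {d : ℕ} (hd : Even d) (ht : 0 < t) (hmoment : 0 ≤ ∑ y, ∑ y', F y y' ^ (d + 1))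
    (hdiag : ∀ y, |F y y| ≤ m) (hoff : ∀ y y', y ≠ y' → F y y' ≤ t) :
    ∑ y, ∑ y', F y y' ^ d ≤
      Fintype.card V ^ 2 * (2 * t ^ d) + Fintype.card V * (m ^ d + m ^ (d + 1) / t) := by
  classical
  have hpoint (y y' : V) : F y y' ^ d + F y y' ^ (d + 1) / t ≤
      2 * t ^ d + if y = y' then m ^ d + m ^ (d + 1) / t else 0 := by
    split_ifs with hyy
    · subst hyy
      linarith [pow_add_pow_succ_div_le_of_abs_le d (hdiag y) ht.le, pow_nonneg ht.le d]
    · simpa using pow_add_pow_succ_div_le_two_mul_pow hd ht (hoff y y' hyy)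
  calc ∑ y, ∑ y', F y y' ^ d
      ≤ ∑ y, ∑ y', (F y y' ^ d + F y y' ^ (d + 1) / t) := by
        simp only [Finset.sum_add_distrib, ← Finset.sum_div]
        exact le_add_of_nonneg_right (div_nonneg hmoment ht.le)
    _ ≤ ∑ y, ∑ y', (2 * t ^ d + if y = y' then m ^ d + m ^ (d + 1) / t else 0) :=
        Finset.sum_le_sum fun y _ ↦ Finset.sum_le_sum fun y' _ ↦ hpoint y y'
    _ = Fintype.card V ^ 2 * (2 * t ^ d) + Fintype.card V * (m ^ d + m ^ (d + 1) / t) := by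
        simp [Finset.sum_add_distrib]
        ring

theorem stmt6_general (V : Type*) [Fintype V] (n : ℕ) (hn : Fintype.card V = n)
    (g : V → V → ℝ) (hsymm : ∀ x y, g x y = g y x) (hbd : ∀ x y, |g x y| ≤ 1)
    (ν : ℝ) (hν0 : 0 < ν) (hν1 : ν ≤ 1)
    (hquasi : ∀ y y' : V, y ≠ y' → ∑ x : V, g y x * g x y' ≤ ν * n)
    (d : ℕ) (hd : Even d) :
    ∑ y : V, ∑ y' : V, (∑ x : V, g y x * g x y') ^ d ≤
      2 * ν ^ d * (n : ℝ) ^ (d + 2) + 2 / ν * (n : ℝ) ^ (d + 1) := by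
  rcases isEmpty_or_nonempty V with hV | hV
  · subst hn
    simp
  have hn0 : (0 : ℝ) < n := by rw [← hn]; exact_mod_cast Fintype.card_pos
  have hmoment : 0 ≤ ∑ y, ∑ y', (∑ x, g y x * g x y') ^ (d + 1) := by
    convert sum_sum_pow_sum_mul_nonneg g (d + 1) using 6
    exact hsymm _ _
  have hdiag (y : V) : |∑ x, g y x * g x y| ≤ n := hn ▸ abs_sum_mul_le_card (hbd y) (hbd · y)
  have hsum := sum_sum_pow_le_of_sum_sum_pow_succ_nonneg hd (mul_pos hν0 hn0) hmoment hdiag hquasi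
  have hν_inv : (n : ℝ) ^ (d + 1) ≤ n ^ (d + 1) / ν :=
    le_div_self (pow_nonneg hn0.le (d + 1)) hν0 hν1
  rw [hn] at hsum
  calc _ ≤ _ := hsum
    _ = 2 * ν ^ d * (n : ℝ) ^ (d + 2) + (n ^ (d + 1) + n ^ (d + 1) / ν) := by
        field_simp
        ring
    _ ≤ 2 * ν ^ d * (n : ℝ) ^ (d + 2) + 2 / ν * (n : ℝ) ^ (d + 1) := by
        linarith [show 2 / ν * (n : ℝ) ^ (d + 1) = n ^ (d + 1) / ν + n ^ (d + 1) / ν by ring]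

theorem stmt6 (V : Type*) [Fintype V] (n : ℕ) (hn : Fintype.card V = n)
    (g : V → V → ℝ) (hsymm : ∀ x y, g x y = g y x) (hbd : ∀ x y, |g x y| ≤ 1)
    (ν : ℝ) (hν0 : 0 < ν) (hν1 : ν ≤ 1)
    (hquasi : ∀ y y' : V, y ≠ y' → ∑ x : V, g y x * g x y' ≤ ν * n)
    (d : ℕ) (hd : Even d) (hd2 : 2 ≤ d) :
    ∑ y : V, ∑ y' : V, (∑ x : V, g y x * g x y') ^ d ≤
      2 * ν ^ d * (n : ℝ) ^ (d + 2) + 2 / ν * (n : ℝ) ^ (d + 1) :=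
  stmt6_general V n hn g hsymm hbd ν hν0 hν1 hquasi d hd
end

section
/- For natural numbers k ≥ l ≥ 1 and r ≥ 2 with k + l ≥ 2r, the inequality (k/(k+l))^{r-2} - ((k-1)(k-2)···(k-r+2))/((k+l-1)(k+l-2)···(k+l-r+2)) ≥ C(r-1,2)·l·k^{r-3}/(k+l)^{r-1} - 2^r/(k+l)² holds. -/
/-! With `N = K + L` and `aᵢ = i L / (K (N - i))` one has `(K - i) / (N - i) = (K / N) (1 - aᵢ)`,
so the ratio of products is `(K / N)^m ∏ (1 - aᵢ) ≤ (K / N)^m (1 - S + S² / 2)`, `S = ∑ aᵢ`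
(the second Bonferroni inequality). As `N / 2 ≤ N - i ≤ N`, `S` lies between `C(m+1,2) L / (K N)`
and twice that: the lower bound yields the main term, and the upper bound, together with the
factor `(K / N)^m`, keeps the quadratic error below `2^(m+2) / N²`. -/

open Finset

theorem Finset.prod_one_sub_le_one_sub_sum_add_sq_div_two {ι : Type*} (s : Finset ι) {a : ι → ℝ}
    (h0 : ∀ i ∈ s, 0 ≤ a i) (h1 : ∀ i ∈ s, a i ≤ 1) :
    ∏ i ∈ s, (1 - a i) ≤ 1 - ∑ i ∈ s, a i + (∑ i ∈ s, a i) ^ 2 / 2 := by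
  classical
  induction s using Finset.induction_on with
  | empty => norm_num
  | insert x s hx ih =>
    rw [prod_insert hx, sum_insert hx]
    have hx0 := h0 x (mem_insert_self x s)
    have hx1 := h1 x (mem_insert_self x s)
    have hS : 0 ≤ ∑ i ∈ s, a i := sum_nonneg fun i hi => h0 i (mem_insert_of_mem hi)
    have ih' := ih (fun i hi => h0 i (mem_insert_of_mem hi))
      (fun i hi => h1 i (mem_insert_of_mem hi))
    nlinarith [mul_le_mul_of_nonneg_left ih' (sub_nonneg.2 hx1),
      mul_nonneg hx0 (sq_nonneg (∑ i ∈ s, a i))]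

theorem Finset.sum_Icc_one_natCast_eq_choose_two (m : ℕ) :
    ∑ i ∈ Icc 1 m, (i : ℝ) = ((m + 1).choose 2 : ℕ) := by
  induction m with
  | zero => simp
  | succ m ih =>
    rw [sum_Icc_succ_top (by omega), ih, Nat.choose_succ_succ' (m + 1), Nat.choose_one_right]
    push_cast; ring

theorem Nat.sq_mul_succ_le_two_pow (m : ℕ) : (m * (m + 1)) ^ 2 ≤ 2 ^ (m + 5) := by
  induction m with
  | zero => norm_num
  | succ n ih =>
    rcases lt_or_ge n 5 with h | h
    · interval_cases n <;> norm_num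
    · have : ((n + 1) * (n + 2)) ^ 2 ≤ 2 * (n * (n + 1)) ^ 2 := by nlinarith
      calc ((n + 1) * (n + 1 + 1)) ^ 2 ≤ 2 * (n * (n + 1)) ^ 2 := this
        _ ≤ 2 * 2 ^ (n + 5) := by omega
        _ = 2 ^ (n + 1 + 5) := by ring

theorem sq_mul_succ_mul_pow_mul_sq_le_two_pow (m : ℕ) {y t : ℝ} (hy0 : 0 ≤ y) (hy1 : y ≤ 1)
    (ht0 : 0 ≤ t) (ht1 : t ≤ 1) (hyt : y * t ≤ 1 / 2) :
    ((m : ℝ) * (m + 1)) ^ 2 * y ^ m * t ^ 2 ≤ 2 ^ (m + 3) := by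
  rcases le_or_gt m 1 with hm | hm
  · have hpow : y ^ m * t ^ 2 ≤ 1 :=
      mul_le_one₀ (pow_le_one₀ hy0 hy1) (by positivity) (pow_le_one₀ ht0 ht1)
    interval_cases m
    · norm_num
    · norm_num; linarith
  · have hpow : y ^ m * t ^ 2 ≤ 1 / 4 := calc
      y ^ m * t ^ 2 ≤ y ^ 2 * t ^ 2 := by
        gcongr ?_ * _; exact pow_le_pow_of_le_one hy0 hy1 hm
      _ = (y * t) ^ 2 := by ring
      _ ≤ (1 / 2) ^ 2 := by gcongr
      _ = 1 / 4 := by norm_num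
    have hnat : ((m : ℝ) * (m + 1)) ^ 2 ≤ 2 ^ (m + 5) := by
      exact_mod_cast Nat.sq_mul_succ_le_two_pow m
    calc ((m : ℝ) * (m + 1)) ^ 2 * y ^ m * t ^ 2
        = ((m : ℝ) * (m + 1)) ^ 2 * (y ^ m * t ^ 2) := by ring
      _ ≤ 2 ^ (m + 5) * (1 / 4) := by gcongr
      _ = 2 ^ (m + 3) := by ring

theorem prod_sub_div_prod_add_sub_eq {K L : ℝ} (hK : K ≠ 0) (hKL : K + L ≠ 0) (s : Finset ℕ)
    (hs : ∀ i ∈ s, K + L - i ≠ 0) :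
    (∏ i ∈ s, (K - i)) / ∏ i ∈ s, (K + L - i) =
      (K / (K + L)) ^ s.card * ∏ i ∈ s, (1 - i * L / (K * (K + L - i))) := by
  rw [← prod_div_distrib, ← prod_const, ← prod_mul_distrib]
  refine prod_congr rfl fun i hi => ?_
  have := hs i hi
  field_simp
  ring

theorem mul_div_mul_le_mul_div_mul_sub {K L N x : ℝ} (hK : 0 < K) (hL : 0 ≤ L) (hx : 0 ≤ x)
    (hxN : x < N) : x * (L / (K * N)) ≤ x * L / (K * (N - x)) := by
  rw [← mul_div_assoc]
  exact div_le_div_of_nonneg_left (by positivity) (by nlinarith) (by nlinarith)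

theorem mul_div_mul_sub_le_mul_two_mul_div {K L N x : ℝ} (hK : 0 < K) (hL : 0 ≤ L) (hx : 0 ≤ x)
    (hN : 0 < N) (hxN : 2 * x ≤ N) : x * L / (K * (N - x)) ≤ x * (2 * L / (K * N)) := by
  rw [div_le_iff₀ (by nlinarith), mul_div_assoc', div_mul_eq_mul_div, le_div_iff₀ (by positivity)]
  nlinarith [mul_nonneg (by positivity : 0 ≤ x * L * K) (by linarith : 0 ≤ N - 2 * x)]

theorem div_add_pow_mul_sq_div_two_le {K L : ℝ} (m : ℕ) (hL : 0 < L) (hLK : L ≤ K) :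
    (K / (K + L)) ^ m * (((m + 1).choose 2 : ℝ) * (2 * L / (K * (K + L)))) ^ 2 / 2 ≤
      2 ^ (m + 2) / (K + L) ^ 2 := by
  have hK : 0 < K := hL.trans_le hLK
  have hN : 0 < K + L := by positivity
  calc (K / (K + L)) ^ m * (((m + 1).choose 2 : ℝ) * (2 * L / (K * (K + L)))) ^ 2 / 2
      = ((m : ℝ) * (m + 1)) ^ 2 * (K / (K + L)) ^ m * (L / K) ^ 2 / (2 * (K + L) ^ 2) := by
        rw [Nat.cast_choose_two]
        push_cast
        field_simp
        ring
    _ ≤ 2 ^ (m + 3) / (2 * (K + L) ^ 2) := by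
      gcongr
      refine sq_mul_succ_mul_pow_mul_sq_le_two_pow m (by positivity) ?_ (by positivity) ?_ ?_
      · rw [div_le_one hN]; linarith
      · rw [div_le_one hK]; exact hLK
      · rw [show K / (K + L) * (L / K) = L / (K + L) by field_simp, div_le_iff₀ hN]
        linarith
    _ = 2 ^ (m + 2) / (K + L) ^ 2 := by
      field_simp
      ring

theorem div_add_pow_sub_prod_div_prod_ge (K L : ℝ) (m : ℕ) (hL : 0 < L) (hLK : L ≤ K)
    (hm : 2 * m ≤ K + L) :
    (K / (K + L)) ^ m - (∏ i ∈ Icc 1 m, (K - i)) / ∏ i ∈ Icc 1 m, (K + L - i) ≥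
      ((m + 1).choose 2 : ℝ) * L * K ^ (m - 1) / (K + L) ^ (m + 1) - 2 ^ (m + 2) / (K + L) ^ 2 := by
  set N := K + L
  set C : ℝ := (((m + 1).choose 2 : ℕ) : ℝ)
  have hK : 0 < K := hL.trans_le hLK
  have hN : 0 < N := by positivity
  have hi : ∀ i ∈ Icc 1 m, (1 : ℝ) ≤ i ∧ 2 * (i : ℝ) ≤ N := fun i hi => by
    obtain ⟨h1, h2⟩ := mem_Icc.1 hi
    exact ⟨by exact_mod_cast h1, by linarith [(Nat.cast_le (α := ℝ)).2 h2]⟩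
  set a : ℕ → ℝ := fun i => i * L / (K * (N - i))
  have ha_lower : ∀ i ∈ Icc 1 m, i * (L / (K * N)) ≤ a i := fun i hi' =>
    mul_div_mul_le_mul_div_mul_sub hK hL.le (by positivity) (by linarith [hi i hi'])
  have ha_upper : ∀ i ∈ Icc 1 m, a i ≤ i * (2 * L / (K * N)) := fun i hi' =>
    mul_div_mul_sub_le_mul_two_mul_div hK hL.le (by positivity) hN (hi i hi').2
  have ha0 : ∀ i ∈ Icc 1 m, 0 ≤ a i := fun i hi' =>
    (by positivity : (0 : ℝ) ≤ _).trans (ha_lower i hi')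
  have ha1 : ∀ i ∈ Icc 1 m, a i ≤ 1 := fun i hi' => by
    refine (ha_upper i hi').trans ?_
    obtain ⟨h1, h2⟩ := hi i hi'
    rw [mul_div_assoc', div_le_one (by positivity)]
    nlinarith
  set S := ∑ i ∈ Icc 1 m, a i
  have hS_lower : C * (L / (K * N)) ≤ S := by
    simpa only [← sum_mul, sum_Icc_one_natCast_eq_choose_two] using sum_le_sum ha_lower
  have hS_sq : S ^ 2 ≤ (C * (2 * L / (K * N))) ^ 2 := by
    refine pow_le_pow_left₀ (sum_nonneg ha0) ?_ 2
    simpa only [← sum_mul, sum_Icc_one_natCast_eq_choose_two] using sum_le_sum ha_upper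
  have hprod := prod_sub_div_prod_add_sub_eq hK.ne' hN.ne' (Icc 1 m)
    (fun i hi' => by linarith [hi i hi'])
  rw [Nat.card_Icc, add_tsub_cancel_right] at hprod
  have hbonf := prod_one_sub_le_one_sub_sum_add_sq_div_two (Icc 1 m) ha0 ha1
  set y := K / N
  have hy : 0 ≤ y ^ m := by positivity
  have hfirst : C * L * K ^ (m - 1) / N ^ (m + 1) = y ^ m * (C * (L / (K * N))) := by
    -- for `m = 0` the exponent `m - 1` truncates, but then `C = 0`
    rcases m with _ | m
    · simp [C]
    · rw [add_tsub_cancel_right, div_pow]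
      field_simp
      ring
  have hsecond := div_add_pow_mul_sq_div_two_le m hL hLK
  rw [hprod, ge_iff_le, hfirst]
  nlinarith [mul_le_mul_of_nonneg_left hS_sq hy, mul_le_mul_of_nonneg_left hS_lower hy,
    mul_le_mul_of_nonneg_left hbonf hy]

theorem stmt13 (k l r : ℕ) (hl : 1 ≤ l) (hkl : l ≤ k) (hr : 2 ≤ r) (hsum : 2 * r ≤ k + l) :
    ((k : ℝ) / (k + l)) ^ (r - 2) -
        (∏ i ∈ Finset.Icc 1 (r - 2), ((k : ℝ) - i)) /
          (∏ i ∈ Finset.Icc 1 (r - 2), ((k : ℝ) + l - i)) ≥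
      ((r - 1).choose 2 : ℝ) * l * (k : ℝ) ^ (r - 3) / ((k : ℝ) + l) ^ (r - 1) -
        2 ^ r / ((k : ℝ) + l) ^ 2 := by
  obtain ⟨m, rfl⟩ := Nat.exists_eq_add_of_le' hr
  have hm : 2 * (m : ℝ) ≤ k + l := by exact_mod_cast (by omega : 2 * m ≤ k + l)
  simpa only [add_tsub_cancel_right, show m + 2 - 1 = m + 1 by omega,
      show m + 2 - 3 = m - 1 by omega]
    using div_add_pow_sub_prod_div_prod_ge k l m (by exact_mod_cast hl) (by exact_mod_cast hkl) hm
end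

section
/- Suppose that for every integer r ≥ 5 and all k there are constants c, d > 0 such that r(k+1,k+1) ≤ (r^{c·r²}/k^{d·r})·C(2k,k). Then there exists a constant C > 0 such that for all sufficiently large k, r(k+1,k+1) ≤ k^{-C·log k / log log k}·C(2k,k). -/
/-!
With `L = log k` and `M = log L`, the exponent `c r² log r - d r L` of the assumed factor is
at most `c M r² - d L r`, a quadratic in `r` minimised near `x = d L / (2 c M)`, with value
`-d² L² / (4 c M)`. Taking `r = ⌊x⌋`, which lies in `[x/2, x]` and satisfies `log r ≤ M` once
`k` is large, loses at most a factor `2` in the exponent, giving `C = d² / (8 c)`.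
-/

open Real Filter

lemma sq_sub_two_mul_le_of_half_le {r x : ℝ} (hxr : x / 2 ≤ r) (hrx : r ≤ x) :
    r ^ 2 - 2 * x * r ≤ -(x ^ 2 / 2) := by
  nlinarith

lemma half_le_natFloor {x : ℝ} (hx : 2 ≤ x) : x / 2 ≤ ⌊x⌋₊ := by
  linarith [Nat.lt_floor_add_one x]

lemma rpow_mul_sq_div_rpow_le {c d k M x r : ℝ} (hc : 0 < c) (hk : 0 < k) (hM : 0 < M)
    (hr : 0 < r) (hrM : log r ≤ M) (hx : d * log k = 2 * c * M * x)
    (hxr : x / 2 ≤ r) (hrx : r ≤ x) :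
    r ^ (c * r ^ 2) / k ^ (d * r) ≤ k ^ (-(d ^ 2 / (8 * c) * log k / M)) := by
  rw [← log_le_log_iff (by positivity) (by positivity), log_div (by positivity) (by positivity),
    log_rpow hr, log_rpow hk, log_rpow hk]
  calc c * r ^ 2 * log r - d * r * log k
      ≤ c * r ^ 2 * M - d * r * log k := by gcongr
    _ = c * M * (r ^ 2 - 2 * x * r) := by rw [mul_right_comm d, hx]; ring
    _ ≤ c * M * -(x ^ 2 / 2) := by gcongr; exact sq_sub_two_mul_le_of_half_le hxr hrx
    _ = -((2 * c * M * x) ^ 2 / (8 * c * M)) := by field_simp; ring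
    _ = -(d ^ 2 / (8 * c) * log k / M) * log k := by rw [← hx]; field_simp

lemma eventually_five_le_div_log_le {a : ℝ} (ha : 0 < a) :
    ∀ᶠ L in atTop, 0 < log L ∧ 5 ≤ a * L / log L ∧ a * L / log L ≤ L := by
  have hlog : ∀ᶠ L : ℝ in atTop, a ≤ log L := tendsto_log_atTop.eventually_ge_atTop a
  have hsmall : ∀ᶠ L : ℝ in atTop, log L ≤ a / 5 * L := by
    filter_upwards [isLittleO_log_id_atTop.bound (by positivity : 0 < a / 5),
      eventually_ge_atTop 1] with L hL hL1
    simpa [abs_of_nonneg (log_nonneg hL1), abs_of_nonneg (by linarith : 0 ≤ L)] using hL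
  filter_upwards [hlog, hsmall, eventually_ge_atTop 0] with L hL hsmall hL0
  have hpos : 0 < log L := ha.trans_le hL
  refine ⟨hpos, ?_, ?_⟩
  · rw [le_div_iff₀ hpos]; linarith
  · rw [div_le_iff₀ hpos, mul_comm]; exact mul_le_mul_of_nonneg_left hL hL0

theorem stmt19
    (h : ∃ c d : ℝ, 0 < c ∧ 0 < d ∧ ∀ r : ℕ, 5 ≤ r → ∀ k : ℕ, 1 ≤ k →
      (ramsey (k + 1) (k + 1) : ℝ) ≤
        (r : ℝ) ^ (c * (r : ℝ) ^ 2) / (k : ℝ) ^ (d * (r : ℝ)) * ((2 * k).choose k : ℝ)) :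
    ∃ C : ℝ, 0 < C ∧ ∃ k₀ : ℕ, ∀ k : ℕ, k₀ ≤ k →
      (ramsey (k + 1) (k + 1) : ℝ) ≤
        (k : ℝ) ^ (-(C * Real.log k / Real.log (Real.log k))) * ((2 * k).choose k : ℝ) := by
  obtain ⟨c, d, hc, hd, h⟩ := h
  refine ⟨d ^ 2 / (8 * c), by positivity, ?_⟩
  have hscale := (tendsto_log_atTop.comp tendsto_natCast_atTop_atTop).eventually
    (eventually_five_le_div_log_le (by positivity : 0 < d / (2 * c)))
  obtain ⟨k₀, hk₀⟩ := eventually_atTop.mp (hscale.and (eventually_ge_atTop 1))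
  refine ⟨k₀, fun k hk => ?_⟩
  obtain ⟨⟨hM, h5x, hxL⟩, hk1⟩ := hk₀ k hk
  simp only [Function.comp_apply] at hM h5x hxL
  set L := log (k : ℝ)
  set x := d / (2 * c) * L / log L
  have hr5 : 5 ≤ ⌊x⌋₊ := Nat.le_floor (by exact_mod_cast h5x)
  have hr : (0 : ℝ) < ⌊x⌋₊ := by positivity
  have hrx : (⌊x⌋₊ : ℝ) ≤ x := Nat.floor_le (by linarith)
  have hrM : log ⌊x⌋₊ ≤ log L := (log_le_log hr hrx).trans (log_le_log (by linarith) hxL)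
  refine (h _ hr5 k hk1).trans (mul_le_mul_of_nonneg_right ?_ (by positivity))
  have hx : d * L = 2 * c * log L * x := by simp only [x]; field_simp
  exact rpow_mul_sq_div_rpow_le hc (by positivity) hM hr hrM hx (half_le_natFloor (by linarith)) hrx
end
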